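/- arXiv:2504.14230 — 2 statements merged into one kernel-verified Lean document; each statement's English description precedes it below -/
import Mathlib

section
/- Let 𝒰 be an infinite universe of players and let φ be a map assigning to every CS-game (N, v, B), with N a nonempty finite subset of 𝒰, a payoff vector φ(N, v, B) ∈ ℝ^N. If φ satisfies efficiency (Σ_{i∈N} φ_i(N, v, B) = v(N) for every CS-game) and null player out (if i is a null player in v, then φ_j(N, v, B) = φ_j(N \ {i}, v restricted to subsets of N \ {i}, B restricted to N \ {i}) for all j ∈ N \ {i}), then φ satisfies the null player property: φ_i(N, v, B) = 0 whenever i is a null player in v. -/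
open Finset

variable {ι : Type*}

/-- The Harsanyi dividend of a coalition `T` in the TU-game `v`. -/
noncomputable def dividend (v : Finset ι → ℝ) (T : Finset ι) : ℝ :=
  ∑ S ∈ T.powerset, (-1 : ℝ) ^ (T.card - S.card) * v S

/-- `i` is a null player in the TU-game `v` on player set `N`. -/
def NullPlayer [DecidableEq ι] (v : Finset ι → ℝ) (N : Finset ι) (i : ι) : Prop :=
  ∀ S ⊆ N \ {i}, v (insert i S) = v S

/-- `i` and `j` are mutually dependent in the TU-game `v` on player set `N`. -/
def MutDep [DecidableEq ι] (v : Finset ι → ℝ) (N : Finset ι) (i j : ι) : Prop :=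
  ∀ S ⊆ N \ {i, j}, v (insert i S) - v S = 0 ∧ v (insert j S) - v S = 0

/-- Two unions `Bp` and `Bq` are highly mutually dependent in `v`. -/
def HighlyMD [DecidableEq ι] (v : Finset ι → ℝ) (N : Finset ι) (Bp Bq : Finset ι) : Prop :=
  ∀ i ∈ Bp, ∀ j ∈ Bq, MutDep v N i j

/-- `Bs` is a coalition structure on `N`: a partition of `N` into nonempty unions. -/
def IsCS [DecidableEq ι] (N : Finset ι) (Bs : Finset (Finset ι)) : Prop :=
  (∀ C ∈ Bs, C.Nonempty) ∧
  (∀ C ∈ Bs, ∀ D ∈ Bs, C ≠ D → Disjoint C D) ∧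
  Bs.biUnion id = N

/-- The restriction `B_{|T} = {C ∩ T : C ∈ Bs, C ∩ T ≠ ∅}` of a coalition structure. -/
def restrictCS [DecidableEq ι] (Bs : Finset (Finset ι)) (T : Finset ι) : Finset (Finset ι) :=
  (Bs.image (fun C => C ∩ T)).filter (fun C => C.Nonempty)

/-- The Owen value of player `i` belonging to the union `C` of the coalition structure
`Bs` in the CS-game `(N, v, Bs)`. -/
noncomputable def Owen [DecidableEq ι] (v : Finset ι → ℝ) (N : Finset ι)
    (Bs : Finset (Finset ι)) (C : Finset ι) (i : ι) : ℝ :=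
  ∑ T ∈ N.powerset.filter (fun T => i ∈ T),
    dividend v T / (((C ∩ T).card : ℝ) * ((Bs.filter (fun D => (D ∩ T).Nonempty)).card : ℝ))

/-- The Shapley value of player `i` in the TU-game `(N, v)`. -/
noncomputable def Shapley [DecidableEq ι] (v : Finset ι → ℝ) (N : Finset ι) (i : ι) : ℝ :=
  ∑ T ∈ N.powerset.filter (fun T => i ∈ T), dividend v T / (T.card : ℝ)


lemma restrict_isCS {ι : Type*} [DecidableEq ι] {N : Finset ι} {Bs : Finset (Finset ι)}
    (h : IsCS N Bs) (T : Finset ι) (hT : T ⊆ N) : IsCS T (restrictCS Bs T) := by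
  obtain ⟨hne, hdisj, hcov⟩ := h
  refine ⟨?_, ?_, ?_⟩
  · intro C hC
    exact (Finset.mem_filter.mp hC).2
  · intro C hC D hD hCD
    obtain ⟨C', hC', rfl⟩ := Finset.mem_image.mp (Finset.mem_filter.mp hC).1
    obtain ⟨D', hD', rfl⟩ := Finset.mem_image.mp (Finset.mem_filter.mp hD).1
    have : C' ≠ D' := fun h => hCD (by rw [h])
    exact Finset.disjoint_left.mpr fun x hx hx' =>
      (Finset.disjoint_left.mp (hdisj C' hC' D' hD' this))
        (Finset.mem_inter.mp hx).1 (Finset.mem_inter.mp hx').1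
  · apply Finset.Subset.antisymm
    · intro x hx
      obtain ⟨C, hC, hxC⟩ := Finset.mem_biUnion.mp hx
      obtain ⟨C', _, rfl⟩ := Finset.mem_image.mp (Finset.mem_filter.mp hC).1
      simp only [id] at hxC
      exact (Finset.mem_inter.mp hxC).2
    · intro x hx
      have hxN : x ∈ N := hT hx
      rw [← hcov] at hxN
      obtain ⟨C, hC, hxC⟩ := Finset.mem_biUnion.mp hxN
      refine Finset.mem_biUnion.mpr ⟨C ∩ T, ?_, Finset.mem_inter.mpr ⟨hxC, hx⟩⟩
      exact Finset.mem_filter.mpr ⟨Finset.mem_image.mpr ⟨C, hC, rfl⟩,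
        ⟨x, Finset.mem_inter.mpr ⟨hxC, hx⟩⟩⟩

/-- Efficiency and null player out together imply the null player
property. -/
theorem nullPlayerProperty_of_efficiency_NPO {ι : Type*} [DecidableEq ι] [Infinite ι]
    (φ : Finset ι → (Finset ι → ℝ) → Finset (Finset ι) → ι → ℝ)
    (hE : ∀ (N : Finset ι) (v : Finset ι → ℝ) (Bs : Finset (Finset ι)),
      N.Nonempty → v ∅ = 0 → IsCS N Bs → ∑ i ∈ N, φ N v Bs i = v N)
    (hNPO : ∀ (N : Finset ι) (v : Finset ι → ℝ) (Bs : Finset (Finset ι)),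
      N.Nonempty → v ∅ = 0 → IsCS N Bs →
      ∀ i ∈ N, NullPlayer v N i → ∀ j ∈ N \ {i},
        φ N v Bs j = φ (N \ {i}) v (restrictCS Bs (N \ {i})) j) :
    ∀ (N : Finset ι) (v : Finset ι → ℝ) (Bs : Finset (Finset ι)),
      N.Nonempty → v ∅ = 0 → IsCS N Bs →
      ∀ i ∈ N, NullPlayer v N i → φ N v Bs i = 0 := by
  intro N v Bs hN hv0 hCS i hi hnull
  by_cases hsing : N \ {i} = ∅
  · have hNi : N = {i} := by
      apply Finset.Subset.antisymm
      · intro x hx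
        by_contra hx'
        exact (Finset.eq_empty_iff_forall_notMem.mp hsing x)
          (Finset.mem_sdiff.mpr ⟨hx, by simpa using hx'⟩)
      · simpa using hi
    have hE' := hE N v Bs hN hv0 hCS
    rw [hNi] at hE' ⊢
    have : v {i} = v ∅ := by
      have := hnull ∅ (by simp)
      simpa using this
    simpa [this, hv0] using hE'
  · have hN' : (N \ {i}).Nonempty := Finset.nonempty_iff_ne_empty.mpr hsing
    have hsub : N \ {i} ⊆ N := Finset.sdiff_subset
    have hCS' := restrict_isCS hCS (N \ {i}) hsub
    have hE1 := hE N v Bs hN hv0 hCS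
    have hE2 := hE (N \ {i}) v (restrictCS Bs (N \ {i})) hN' hv0 hCS'
    have hNPO' := hNPO N v Bs hN hv0 hCS i hi hnull
    have hvN : v N = v (N \ {i}) := by
      have h1 := hnull (N \ {i}) (subset_refl _)
      have h2 : insert i (N \ {i}) = N := by
        ext x
        simp only [Finset.mem_insert, Finset.mem_sdiff, Finset.mem_singleton]
        constructor
        · rintro (rfl | ⟨hx, _⟩) <;> assumption
        · intro hx
          by_cases hxi : x = i
          · exact Or.inl hxi
          · exact Or.inr ⟨hx, hxi⟩
      calc v N = v (insert i (N \ {i})) := by rw [h2]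
        _ = v (N \ {i}) := h1
    have hsplit : ∑ j ∈ N, φ N v Bs j
        = φ N v Bs i + ∑ j ∈ N \ {i}, φ N v Bs j := by
      rw [← Finset.erase_eq, ← Finset.add_sum_erase N _ hi]
    have hsum : ∑ j ∈ N \ {i}, φ N v Bs j
        = ∑ j ∈ N \ {i}, φ (N \ {i}) v (restrictCS Bs (N \ {i})) j :=
      Finset.sum_congr rfl fun j hj => hNPO' j hj
    rw [hsplit, hsum, hE2, ← hvN] at hE1
    linarith
end

section
/- The coalitional value which assigns to every CS-game (N, v, B) the Shapley value of (N, v) (ignoring the coalition structure) satisfies efficiency, null player out, and differential marginality of mutually dependent players within unions, but does not satisfy differential marginality of inter-mutually dependent unions: there exists a CS-game (N, v, B) and two unions B_p, B_q ∈ B that are highly mutually dependent in v (so that taking w = 0 in the axiom applies) with Σ_{i∈B_p} Sh_i(N, v) ≠ Σ_{i∈B_q} Sh_i(N, v). -/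
open Finset

variable {ι : Type*}

/-- The coalitional value assigning to every CS-game `(N, v, Bs)` the Shapley value of
`(N, v)`, ignoring the coalition structure. -/
noncomputable def ShapCV [DecidableEq ι] (N : Finset ι) (v : Finset ι → ℝ)
    (_Bs : Finset (Finset ι)) (i : ι) : ℝ :=
  Shapley v N i

/-- Möbius inversion: the dividends of the subcoalitions of `M` sum to `v M`. -/
lemma sum_dividend [DecidableEq ι] (M : Finset ι) :
    ∀ v : Finset ι → ℝ, ∑ T ∈ M.powerset, dividend v T = v M := by
  classical
  induction M using Finset.induction_on with
  | empty => intro v; simp [dividend]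
  | @insert a s ha ih =>
    intro v
    rw [Finset.sum_powerset_insert ha]
    have key : ∀ T ∈ s.powerset, dividend v (insert a T) =
        dividend (fun S => v (insert a S)) T - dividend v T := by
      intro T hT
      rw [Finset.mem_powerset] at hT
      have haT : a ∉ T := fun h => ha (hT h)
      unfold dividend
      rw [Finset.sum_powerset_insert haT]
      have hc : (insert a T).card = T.card + 1 := Finset.card_insert_of_notMem haT
      have h1 : ∀ S ∈ T.powerset,
          (-1 : ℝ) ^ ((insert a T).card - S.card) * v S
            = -((-1 : ℝ) ^ (T.card - S.card) * v S) := by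
        intro S hS
        rw [Finset.mem_powerset] at hS
        have hle : S.card ≤ T.card := Finset.card_le_card hS
        rw [hc, Nat.succ_sub hle, pow_succ]
        ring
      have h2 : ∀ S ∈ T.powerset,
          (-1 : ℝ) ^ ((insert a T).card - (insert a S).card) * v (insert a S)
            = (-1 : ℝ) ^ (T.card - S.card) * v (insert a S) := by
        intro S hS
        rw [Finset.mem_powerset] at hS
        have haS : a ∉ S := fun h => ha (hT (hS h))
        rw [hc, Finset.card_insert_of_notMem haS, Nat.succ_sub_succ]
      rw [Finset.sum_congr rfl h1, Finset.sum_congr rfl h2, Finset.sum_neg_distrib]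
      ring
    rw [Finset.sum_congr rfl key, Finset.sum_sub_distrib, ih v,
      ih (fun S => v (insert a S))]
    ring

/-- If adding `i` never changes the worth of subcoalitions of `A`, then every
coalition `T ⊆ A` containing `i` has zero dividend. -/
lemma dividend_inert [DecidableEq ι] {v : Finset ι → ℝ} {A T : Finset ι} {i : ι}
    (hv : ∀ S ⊆ A \ {i}, v (insert i S) = v S) (hTA : T ⊆ A) (hiT : i ∈ T) :
    dividend v T = 0 := by
  classical
  have hT : insert i (T.erase i) = T := Finset.insert_erase hiT
  have hni : i ∉ T.erase i := Finset.notMem_erase _ _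
  unfold dividend
  rw [← hT, Finset.sum_powerset_insert hni]
  have hc : (insert i (T.erase i)).card = (T.erase i).card + 1 :=
    Finset.card_insert_of_notMem hni
  have hsub : T.erase i ⊆ A \ {i} := by
    intro x hx
    rw [Finset.mem_erase] at hx
    rw [Finset.mem_sdiff, Finset.mem_singleton]
    exact ⟨hTA (hx.2), hx.1⟩
  have key : ∀ S ∈ (T.erase i).powerset,
      (-1 : ℝ) ^ ((insert i (T.erase i)).card - (insert i S).card) * v (insert i S)
        = -((-1 : ℝ) ^ ((insert i (T.erase i)).card - S.card) * v S) := by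
    intro S hS
    rw [Finset.mem_powerset] at hS
    have haS : i ∉ S := fun h => hni (hS h)
    have hle : S.card ≤ (T.erase i).card := Finset.card_le_card hS
    rw [hv S (hS.trans hsub), hc, Finset.card_insert_of_notMem haS,
      Nat.succ_sub_succ, Nat.succ_sub hle, pow_succ]
    ring
  rw [Finset.sum_congr rfl key, Finset.sum_neg_distrib]
  ring

/-- The dividend is linear (for differences of games). -/
lemma dividend_sub [DecidableEq ι] (v w : Finset ι → ℝ) (T : Finset ι) :
    dividend (fun S => v S - w S) T = dividend v T - dividend w T := by
  simp [dividend, mul_sub, Finset.sum_sub_distrib]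

/-- The Shapley value is linear (for differences of games). -/
lemma shapley_sub [DecidableEq ι] (v w : Finset ι → ℝ) (N : Finset ι) (k : ι) :
    Shapley (fun S => v S - w S) N k = Shapley v N k - Shapley w N k := by
  simp [Shapley, dividend_sub, sub_div, Finset.sum_sub_distrib]

/-- If `i` is inert outside of `j`, the Shapley value of `i` only picks up the
dividends of coalitions containing both `i` and `j`. -/
lemma shapley_eq_pair [DecidableEq ι] (u : Finset ι → ℝ) (N : Finset ι) (i j : ι)
    (h : ∀ S ⊆ N \ {i, j}, u (insert i S) = u S) :
    Shapley u N i
      = ∑ T ∈ N.powerset.filter (fun T => i ∈ T ∧ j ∈ T), dividend u T / (T.card : ℝ) := by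
  classical
  unfold Shapley
  symm
  apply Finset.sum_subset
  · intro T hT
    simp only [Finset.mem_filter, Finset.mem_powerset] at *
    exact ⟨hT.1, hT.2.1⟩
  · intro T hT hT'
    simp only [Finset.mem_filter, Finset.mem_powerset] at hT hT'
    have hjT : j ∉ T := fun hjm => hT' ⟨hT.1, hT.2, hjm⟩
    have hz : dividend u T = 0 := by
      refine dividend_inert (A := N \ {j}) ?_ ?_ hT.2
      · intro S hS
        apply h
        refine hS.trans ?_
        intro x hx
        simp only [Finset.mem_sdiff, Finset.mem_singleton, Finset.mem_insert] at *
        tauto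
      · intro x hx
        rw [Finset.mem_sdiff, Finset.mem_singleton]
        exact ⟨hT.1 hx, fun e => hjT (e ▸ hx)⟩
    rw [hz, zero_div]

/-- Efficiency of the Shapley value. -/
lemma shapley_eff [DecidableEq ι] (v : Finset ι → ℝ) (N : Finset ι) (h0 : v ∅ = 0) :
    ∑ i ∈ N, Shapley v N i = v N := by
  classical
  have step : ∑ i ∈ N, Shapley v N i
      = ∑ T ∈ N.powerset, ∑ i ∈ N, if i ∈ T then dividend v T / (T.card : ℝ) else 0 := by
    rw [Finset.sum_comm]
    refine Finset.sum_congr rfl fun i _ => ?_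
    simp [Shapley, Finset.sum_filter]
  rw [step]
  have step2 : ∀ T ∈ N.powerset,
      (∑ i ∈ N, if i ∈ T then dividend v T / (T.card : ℝ) else 0) = dividend v T := by
    intro T hT
    rw [Finset.mem_powerset] at hT
    rw [Finset.sum_ite_mem, Finset.inter_eq_right.mpr hT, Finset.sum_const]
    by_cases hT0 : T = ∅
    · simp [hT0, dividend, h0]
    · have hcard : (T.card : ℝ) ≠ 0 := by
        exact_mod_cast fun h => hT0 (Finset.card_eq_zero.mp h)
      rw [nsmul_eq_mul, mul_comm, div_mul_cancel₀ _ hcard]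
  rw [Finset.sum_congr rfl step2, sum_dividend]

/-- The Shapley value, viewed as a coalitional value ignoring the
coalition structure, satisfies efficiency, null player out and differential
marginality of mutually dependent players within unions, but fails differential
marginality of inter-mutually dependent unions: there is a CS-game with two unions
that are highly mutually dependent in `v` (so that taking `w = 0` in the axiom
applies) whose total Shapley payoffs differ. -/
theorem shapley_E_NPO_UDMmd_not_DMUmd {ι : Type*} [DecidableEq ι] [Infinite ι] :
    -- efficiency
    (∀ (N : Finset ι) (v : Finset ι → ℝ) (Bs : Finset (Finset ι)),
      N.Nonempty → v ∅ = 0 → IsCS N Bs → ∑ i ∈ N, ShapCV N v Bs i = v N) ∧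
    -- null player out
    (∀ (N : Finset ι) (v : Finset ι → ℝ) (Bs : Finset (Finset ι)),
      N.Nonempty → v ∅ = 0 → IsCS N Bs →
      ∀ i ∈ N, NullPlayer v N i → ∀ j ∈ N \ {i},
        ShapCV N v Bs j = ShapCV (N \ {i}) v (restrictCS Bs (N \ {i})) j) ∧
    -- differential marginality of mutually dependent players within unions
    (∀ (N : Finset ι) (v w : Finset ι → ℝ) (Bs : Finset (Finset ι)),
      N.Nonempty → v ∅ = 0 → w ∅ = 0 → IsCS N Bs →
      ∀ C ∈ Bs, ∀ i ∈ C, ∀ j ∈ C, MutDep (fun S => v S - w S) N i j →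
        ShapCV N v Bs i - ShapCV N v Bs j = ShapCV N w Bs i - ShapCV N w Bs j) ∧
    -- failure of differential marginality of inter-mutually dependent unions
    (∃ (N : Finset ι) (v : Finset ι → ℝ) (Bs : Finset (Finset ι)),
      N.Nonempty ∧ v ∅ = 0 ∧ IsCS N Bs ∧
      ∃ Cp ∈ Bs, ∃ Cq ∈ Bs, HighlyMD v N Cp Cq ∧
        ∑ i ∈ Cp, ShapCV N v Bs i ≠ ∑ i ∈ Cq, ShapCV N v Bs i) := by
  classical
  refine ⟨?_, ?_, ?_, ?_⟩
  · -- efficiency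
    intro N v Bs _ h0 _
    simpa [ShapCV] using shapley_eff v N h0
  · -- null player out
    intro N v Bs _ _ _ i hi hnull j hj
    simp only [ShapCV, Shapley]
    symm
    apply Finset.sum_subset
    · intro T hT
      simp only [Finset.mem_filter, Finset.mem_powerset] at *
      exact ⟨hT.1.trans (Finset.sdiff_subset), hT.2⟩
    · intro T hT hT'
      simp only [Finset.mem_filter, Finset.mem_powerset] at hT hT'
      have hiT : i ∈ T := by
        by_contra hiT
        exact hT' ⟨Finset.subset_sdiff.mpr ⟨hT.1, by
          simp [Finset.disjoint_singleton_right, hiT]⟩, hT.2⟩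
      rw [dividend_inert hnull hT.1 hiT, zero_div]
  · -- differential marginality within unions
    intro N v w Bs _ _ _ _ C _ i _ j _ hmd
    set u : Finset ι → ℝ := fun S => v S - w S with hu
    have h1 : ∀ S ⊆ N \ {i, j}, u (insert i S) = u S := fun S hS => by
      have := (hmd S hS).1; simpa [hu, sub_eq_zero] using this
    have h2 : ∀ S ⊆ N \ {j, i}, u (insert j S) = u S := fun S hS => by
      have hS' : S ⊆ N \ {i, j} := by rwa [Finset.pair_comm i j]
      have := (hmd S hS').2; simpa [hu, sub_eq_zero] using this
    have e1 := shapley_eq_pair u N i j h1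
    have e2 := shapley_eq_pair u N j i h2
    have hset : N.powerset.filter (fun T => j ∈ T ∧ i ∈ T)
        = N.powerset.filter (fun T => i ∈ T ∧ j ∈ T) := by
      ext T; simp only [Finset.mem_filter]; tauto
    have huij : Shapley u N i = Shapley u N j := by rw [e1, e2, hset]
    have li := shapley_sub v w N i
    have lj := shapley_sub v w N j
    simp only [ShapCV]
    rw [← hu] at li lj
    linarith [li, lj, huij]
  · -- failure of inter-union differential marginality
    obtain ⟨a⟩ := (inferInstance : Nonempty ι)
    obtain ⟨b, hb⟩ := Infinite.exists_notMem_finset ({a} : Finset ι)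
    obtain ⟨c, hc⟩ := Infinite.exists_notMem_finset ({a, b} : Finset ι)
    have hba : b ≠ a := by simpa using hb
    have hca : c ≠ a := fun h => hc (by simp [h])
    have hcb : c ≠ b := fun h => hc (by simp [h])
    set N : Finset ι := {a, b, c} with hN
    have haN : a ∈ N := by simp [hN]
    have hbN : b ∈ N := by simp [hN]
    have hcN : c ∈ N := by simp [hN]
    have hNcard : N.card = 3 := by
      rw [hN, Finset.card_insert_of_notMem (by simp [hba.symm, hca.symm]),
        Finset.card_insert_of_notMem (by simp [hcb.symm]), Finset.card_singleton]
    set v : Finset ι → ℝ := fun S => if S = N then 1 else 0 with hv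
    have hNne : N.Nonempty := ⟨a, haN⟩
    have hv0 : v ∅ = 0 := by
      rw [hv]; simp only []
      rw [if_neg]; exact fun h => by simpa [← h] using haN
    set Bs : Finset (Finset ι) := {{a}, {b, c}} with hBs
    have hne : ({a} : Finset ι) ≠ {b, c} := by
      intro h
      have : b ∈ ({a} : Finset ι) := h ▸ (by simp)
      exact hba (by simpa using this)
    have hdisj : Disjoint ({a} : Finset ι) {b, c} := by
      simp only [Finset.disjoint_singleton_left, Finset.mem_insert, Finset.mem_singleton]
      exact fun h => h.elim (fun h' => hba h'.symm) (fun h' => hca h'.symm)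
    -- dividends of the unanimity game
    have hdiv : ∀ T ∈ N.powerset, dividend v T = if T = N then 1 else 0 := by
      intro T hT
      rw [Finset.mem_powerset] at hT
      by_cases hTN : T = N
      · rw [hTN, if_pos rfl]
        unfold dividend
        rw [Finset.sum_eq_single_of_mem N (Finset.mem_powerset_self N)]
        · simp [hv]
        · intro S hS hSne
          rw [hv]; simp only []
          rw [if_neg hSne, mul_zero]
      · rw [if_neg hTN]
        unfold dividend
        apply Finset.sum_eq_zero
        intro S hS
        rw [Finset.mem_powerset] at hS
        have hSN : S ≠ N := fun h => hTN (Finset.Subset.antisymm hT (h ▸ hS))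
        rw [hv]; simp only []
        rw [if_neg hSN, mul_zero]
    -- Shapley value of each player is 1/3
    have hsh : ∀ i ∈ N, Shapley v N i = 1 / 3 := by
      intro i hiN
      unfold Shapley
      rw [Finset.sum_eq_single_of_mem N
        (Finset.mem_filter.mpr ⟨Finset.mem_powerset_self N, hiN⟩)]
      · rw [hdiv N (Finset.mem_powerset_self N), if_pos rfl, hNcard]; norm_num
      · intro T hT hTN
        rw [hdiv T (Finset.mem_filter.mp hT).1, if_neg hTN, zero_div]
    refine ⟨N, v, Bs, hNne, hv0, ⟨?_, ?_, ?_⟩, {a}, by simp [hBs], {b, c},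
      by simp [hBs], ?_, ?_⟩
    · -- nonempty unions
      intro C hC
      rw [hBs] at hC
      rcases Finset.mem_insert.mp hC with h | h
      · exact h ▸ ⟨a, by simp⟩
      · rw [Finset.mem_singleton] at h; exact h ▸ ⟨b, by simp⟩
    · -- disjoint unions
      intro C hC D hD hCD
      rw [hBs] at hC hD
      rcases Finset.mem_insert.mp hC with h1 | h1 <;>
        rcases Finset.mem_insert.mp hD with h2 | h2 <;>
        rw [Finset.mem_singleton] at * <;> subst h1 <;> subst h2
      · exact absurd rfl hCD
      · exact hdisj
      · exact hdisj.symm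
      · exact absurd rfl hCD
    · -- biUnion
      rw [hBs, hN]
      ext x
      simp [Finset.mem_biUnion]
      tauto
    · -- HighlyMD
      intro i hi j hj
      rw [Finset.mem_singleton] at hi
      rw [hi]
      intro S hS
      have haS : a ∉ S := fun h => by simpa using (hS h)
      have hjS : j ∉ S := fun h => by
        have := hS h
        simp only [Finset.mem_sdiff, Finset.mem_insert, Finset.mem_singleton] at this
        tauto
      have hja : j ≠ a := by
        rcases Finset.mem_insert.mp hj with h | h
        · exact h ▸ hba
        · rw [Finset.mem_singleton] at h; exact h ▸ hca
      have hjN : j ∈ N := by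
        rcases Finset.mem_insert.mp hj with h | h
        · exact h ▸ hbN
        · rw [Finset.mem_singleton] at h; exact h ▸ hcN
      have hSne : S ≠ N := fun h => haS (h ▸ haN)
      have h1 : insert a S ≠ N := fun h => by
        have : j ∈ insert a S := h ▸ hjN
        rcases Finset.mem_insert.mp this with h' | h'
        · exact hja h'
        · exact hjS h'
      have h2 : insert j S ≠ N := fun h => by
        have : a ∈ insert j S := h ▸ haN
        rcases Finset.mem_insert.mp this with h' | h'
        · exact hja h'.symm
        · exact haS h'
      rw [hv]
      simp only []
      rw [if_neg hSne, if_neg h1, if_neg h2]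
      norm_num
    · -- payoffs differ
      simp only [ShapCV]
      rw [Finset.sum_singleton, hsh a haN,
        Finset.sum_insert (by simp [hcb.symm]), Finset.sum_singleton,
        hsh b hbN, hsh c hcN]
      norm_num
end
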